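/- arXiv:1701.01812 — 2 statements merged into one kernel-verified Lean document; each statement's English description precedes it below -/
import Mathlib

section
/- Let P be a path in T with vertex sequence p(1),…,p(k), let u be a vertex not on P that is adjacent in T to the endpoint p(k), and let P' = P ∪ {u}. For a vertex p of a path R write s_p(R)=(1/vt)·d̄_R(û,p). Then s_{p(i)}(P') = s_{p(i)}(P) + (1/vt)·w_{T_u}·d(P,u) for every i=1,…,k, and s_u(P') = s_{p(k)}(P) + (1/vt)·(w(T) − w_{T_u})·d(P,u). -/
open scoped ENNReal

noncomputable section

/-- A finite tree with positive edge lengths, nonnegative vertex weights,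
and a positive cruising speed. -/
structure WeightedTree (V : Type*) [Fintype V] where
  G : SimpleGraph V
  isTree : G.IsTree
  len : Sym2 V → ℝ
  len_pos : ∀ e ∈ G.edgeSet, 0 < len e
  w : V → ℝ
  w_nonneg : ∀ v, 0 ≤ w v
  vt : ℝ
  vt_pos : 0 < vt

namespace WeightedTree

variable {V : Type*} [Fintype V] [DecidableEq V] (T : WeightedTree V)

/-- `d x y`: the length of the unique path between `x` and `y`. -/
def d (x y : V) : ℝ :=
  (((T.isTree.existsUnique_path x y).choose).edges.map T.len).sum

/-- The closest vertex of the list `l` (the vertex sequence of a path) to `v`. -/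
def closest (l : List V) (v : V) : V :=
  if h : ∃ u ∈ l, ∀ u' ∈ l, T.d u v ≤ T.d u' v then h.choose else v

/-- `d(P,v)`: the distance from the path with vertex sequence `l` to `v`. -/
def dP (l : List V) (v : V) : ℝ := T.d (T.closest l v) v

/-- The weight of the branch of the vertex `q` with respect to the path with
vertex sequence `l`: the total weight of all vertices whose closest vertex on
the path is `q`. -/
def wBranch (l : List V) (q : V) : ℝ :=
  ∑ v ∈ Finset.univ.filter (fun v => T.closest l v = q), T.w v

/-- `w(T)`: total weight of the tree. -/
def wT : ℝ := ∑ v, T.w v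

/-- `d̄_P(û,p) = ∑_j w_{T_{p(j)}} d(p(j), p)` for the path with vertex sequence `l`. -/
def dbar (l : List V) (p : V) : ℝ := (l.map (fun q => T.wBranch l q * T.d q p)).sum

/-- `s_p(P) = (1/vt) d̄_P(û,p)` for a vertex `p` of the path. -/
def sOn (l : List V) (p : V) : ℝ := (1 / T.vt) * T.dbar l p

/-- `s_i(P) = (1/vt) d̄_P(û,p(i))`, where `p(i)` is the closest vertex of the path to `v_i`. -/
def s (l : List V) (v : V) : ℝ := T.sOn l (T.closest l v)

/-- Mean service time `S̄(P)`. -/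
def Sbar (l : List V) : ℝ := ∑ v, T.w v * T.s l v

/-- Second moment `S̄²(P)` of the service time. -/
def S2bar (l : List V) : ℝ := ∑ v, T.w v * (T.s l v) ^ 2

/-- `T̄1(P) = (1/vt) ∑ w_i d(P, v_i)`. -/
def T1 (l : List V) : ℝ := (1 / T.vt) * ∑ v, T.w v * T.dP l v

/-- `T̄2(P) = (1/vt) ∑ w_i d̄_P(û, p(i))`. -/
def T2 (l : List V) : ℝ := (1 / T.vt) * ∑ v, T.w v * T.dbar l (T.closest l v)

/-- The M/G/1 queueing delay `Q̄(P)`, valued in `[0,∞]`. -/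
def Qbar (lam : ℝ) (l : List V) : ℝ≥0∞ :=
  if 0 < 1 - lam * T.Sbar l then
    ENNReal.ofReal (lam * T.S2bar l / (2 * (1 - lam * T.Sbar l)))
  else ⊤

/-- The M/G/1 queueing delay `Q̄(P)` as an extended real. -/
def QbarE (lam : ℝ) (l : List V) : EReal :=
  if 0 < 1 - lam * T.Sbar l then
    ((lam * T.S2bar l / (2 * (1 - lam * T.Sbar l)) : ℝ) : EReal)
  else ⊤

/-- `|P|`: the total length of the path `P`. -/
def plen {a b : V} (P : T.G.Walk a b) : ℝ := (P.edges.map T.len).sum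

/-- The objective `F(P) = α1·|P| + α2·(β·(Q̄(P)+T̄2(P)) + (1-β)·T̄1(P))`. -/
def F (α1 α2 β lam : ℝ) {a b : V} (P : T.G.Walk a b) : EReal :=
  ((α1 * T.plen P : ℝ) : EReal) +
    (α2 : EReal) *
      ((β : EReal) * (T.QbarE lam P.support + ((T.T2 P.support : ℝ) : EReal)) +
        (((1 - β) * T.T1 P.support : ℝ) : EReal))

end WeightedTree

/-!
Let `c` be the vertex of a path `P` closest to `v`. In a tree, the path from `v` to `c` meets `P`
only at `c`, so `d(v, q) = d(v, c) + d(c, q)` for all `q` on `P` and `c` is the unique minimiser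
of `d(·, v)` on `P`. Regrouping branches gives `d̄_P(û, p) = ∑_v w_v d(c_P(v), p)`. Appending `u`
moves the closest vertex from `p(k)` to `u` for exactly the vertices of `T_u` and fixes it for all
others, and `d(u, q) = d(u, p(k)) + d(p(k), q)` for `q` on `P`. Hence each summand of
`d̄_{P'}(û, q)` exceeds that of `d̄_P(û, q)` by `d(P, u)` if `v ∈ T_u` and by `0` otherwise, while
each summand of `d̄_{P'}(û, u)` exceeds that of `d̄_P(û, p(k))` by `d(P, u)` if `v ∉ T_u` and by
`0` otherwise.
-/

namespace SimpleGraph.Walk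

variable {V : Type*} {G : SimpleGraph V}

theorem IsPath.append_of_forall_mem {u v w : V} {p : G.Walk u v} {q : G.Walk v w}
    (hp : p.IsPath) (hq : q.IsPath) (h : ∀ x ∈ p.support, x ∈ q.support → x = v) :
    (p.append q).IsPath := by
  rw [isPath_def, support_append]
  refine hp.support_nodup.append hq.support_nodup.tail fun x hxp hxq => ?_
  obtain rfl := h x hxp (List.mem_of_mem_tail hxq)
  have hnd := hq.support_nodup
  rw [← cons_tail_support] at hnd
  exact (List.nodup_cons.1 hnd).1 hxq

theorem mem_support_concat_iff {u v w x : V} {p : G.Walk u v} (h : G.Adj v w) :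
    x ∈ (p.concat h).support ↔ x ∈ p.support ∨ x = w := by
  simp [support_concat]

theorem exists_isPath_support_subset [DecidableEq V] {u v x y : V} (p : G.Walk u v)
    (hx : x ∈ p.support) (hy : y ∈ p.support) :
    ∃ q : G.Walk x y, q.IsPath ∧ q.support ⊆ p.support := by
  refine ⟨((p.takeUntil x hx).reverse.append (p.takeUntil y hy)).bypass, bypass_isPath _,
    fun z hz => ?_⟩
  have hz' := support_bypass_subset_support _ hz
  rw [mem_support_append_iff, support_reverse, List.mem_reverse] at hz'
  rcases hz' with hz' | hz'
  · exact p.support_takeUntil_subset_support hx hz'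
  · exact p.support_takeUntil_subset_support hy hz'

end SimpleGraph.Walk

namespace WeightedTree

open SimpleGraph

variable {V : Type*} [Fintype V] (T : WeightedTree V)

theorem plen_nonneg {x y : V} (W : T.G.Walk x y) : 0 ≤ T.plen W :=
  List.sum_nonneg fun _ hmem => by
    obtain ⟨e, he, rfl⟩ := List.mem_map.1 hmem
    exact (T.len_pos e (W.edges_subset_edgeSet he)).le

theorem plen_pos {x y : V} (W : T.G.Walk x y) (hxy : x ≠ y) : 0 < T.plen W := by
  cases W with
  | nil => exact absurd rfl hxy
  | cons hadj W' =>
    simp only [plen, Walk.edges_cons, List.map_cons, List.sum_cons]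
    exact add_pos_of_pos_of_nonneg (T.len_pos _ hadj) (T.plen_nonneg W')

theorem plen_append {x y z : V} (W₁ : T.G.Walk x y) (W₂ : T.G.Walk y z) :
    T.plen (W₁.append W₂) = T.plen W₁ + T.plen W₂ := by
  simp [plen, Walk.edges_append]

theorem d_eq_plen {x y : V} {W : T.G.Walk x y} (hW : W.IsPath) : T.d x y = T.plen W := by
  rw [d, (T.isTree.existsUnique_path x y).choose_spec.2 W hW, plen]

theorem exists_d_eq_plen (x y : V) : ∃ W : T.G.Walk x y, W.IsPath ∧ T.d x y = T.plen W :=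
  let ⟨W, hW⟩ := (T.isTree.existsUnique_path x y).exists
  ⟨W, hW, T.d_eq_plen hW⟩

theorem d_nonneg (x y : V) : 0 ≤ T.d x y := by
  obtain ⟨W, -, hW⟩ := T.exists_d_eq_plen x y
  exact hW ▸ T.plen_nonneg W

theorem d_eq_zero_iff {x y : V} : T.d x y = 0 ↔ x = y := by
  refine ⟨fun h => ?_, ?_⟩
  · by_contra hxy
    obtain ⟨W, -, hW⟩ := T.exists_d_eq_plen x y
    exact (T.plen_pos W hxy).ne' (hW ▸ h)
  · rintro rfl
    simpa [plen] using T.d_eq_plen (Walk.IsPath.nil : (Walk.nil : T.G.Walk x x).IsPath)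

theorem d_self (x : V) : T.d x x = 0 := T.d_eq_zero_iff.2 rfl

theorem d_comm (x y : V) : T.d x y = T.d y x := by
  obtain ⟨W, hW, hd⟩ := T.exists_d_eq_plen x y
  rw [hd, T.d_eq_plen hW.reverse, plen, plen, Walk.edges_reverse, List.map_reverse,
    List.sum_reverse]

variable [DecidableEq V]

theorem d_add_d_of_mem_support {x y z : V} {W : T.G.Walk x z} (hW : W.IsPath)
    (hy : y ∈ W.support) : T.d x y + T.d y z = T.d x z := by
  rw [T.d_eq_plen (hW.takeUntil hy), T.d_eq_plen (hW.dropUntil hy), ← plen_append,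
    W.take_spec hy, T.d_eq_plen hW]

theorem closest_spec {l : List V} (hl : l ≠ []) (v : V) :
    T.closest l v ∈ l ∧ ∀ q ∈ l, T.d (T.closest l v) v ≤ T.d q v := by
  have hex : ∃ u ∈ l, ∀ u' ∈ l, T.d u v ≤ T.d u' v := by
    obtain ⟨u, hu, hmin⟩ :=
      l.toFinset.exists_min_image (T.d · v) (List.toFinset_nonempty_iff l |>.2 hl)
    exact ⟨u, List.mem_toFinset.1 hu, fun u' hu' => hmin u' (List.mem_toFinset.2 hu')⟩
  rw [closest, dif_pos hex]
  exact hex.choose_spec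

theorem dbar_eq_sum_closest {l : List V} (hl : l.Nodup) (hne : l ≠ []) (p : V) :
    T.dbar l p = ∑ v, T.w v * T.d (T.closest l v) p := by
  rw [dbar, ← List.sum_toFinset _ hl]
  simp only [wBranch, Finset.sum_mul]
  rw [← Finset.sum_fiberwise_of_maps_to (s := Finset.univ) (t := l.toFinset)
    (fun v _ => List.mem_toFinset.2 (T.closest_spec hne v).1)
    (fun v => T.w v * T.d (T.closest l v) p)]
  refine Finset.sum_congr rfl fun q _ => Finset.sum_congr rfl fun v hv => ?_
  rw [(Finset.mem_filter.1 hv).2]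

theorem sum_w_mul_ite_closest_eq (l : List V) (q : V) (δ : ℝ) :
    ∑ v, T.w v * (if T.closest l v = q then δ else 0) = T.wBranch l q * δ := by
  simp only [mul_ite, mul_zero, ← Finset.sum_filter, wBranch, Finset.sum_mul]

theorem sum_w_mul_ite_closest_ne (l : List V) (q : V) (δ : ℝ) :
    ∑ v, T.w v * (if T.closest l v = q then 0 else δ) = (T.wT - T.wBranch l q) * δ := by
  simp only [mul_ite, mul_zero, Finset.sum_ite, Finset.sum_const_zero, zero_add, wBranch, wT,
    sub_mul, Finset.sum_mul]
  rw [← Finset.sum_filter_add_sum_filter_not Finset.univ (T.closest l · = q)]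
  ring

variable {T} {a b : V} {P : T.G.Walk a b}

theorem eq_closest_of_mem_support {v y : V}
    {W : T.G.Walk v (T.closest P.support v)} (hW : W.IsPath) (hy : y ∈ W.support)
    (hyP : y ∈ P.support) : y = T.closest P.support v := by
  have hsplit := T.d_add_d_of_mem_support hW hy
  have hmin := (T.closest_spec P.support_ne_nil v).2 y hyP
  rw [T.d_comm v, T.d_comm v] at hsplit
  exact T.d_eq_zero_iff.1 (le_antisymm (by linarith) (T.d_nonneg _ _))

theorem d_eq_d_closest_add (P : T.G.Walk a b) (v : V) {q : V} (hq : q ∈ P.support) :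
    T.d v q = T.d v (T.closest P.support v) + T.d (T.closest P.support v) q := by
  obtain ⟨W, hW, hdW⟩ := T.exists_d_eq_plen v (T.closest P.support v)
  obtain ⟨R, hR, hRP⟩ :=
    P.exists_isPath_support_subset (T.closest_spec P.support_ne_nil v).1 hq
  rw [hdW, T.d_eq_plen hR, ← plen_append, T.d_eq_plen (hW.append_of_forall_mem hR
    fun y hyW hyR => eq_closest_of_mem_support hW hyW (hRP hyR))]

theorem closest_eq_of_forall_le {v m : V} (hm : m ∈ P.support)
    (h : ∀ q ∈ P.support, T.d m v ≤ T.d q v) : T.closest P.support v = m := by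
  have hsplit := T.d_eq_d_closest_add P v hm
  have hle := h _ (T.closest_spec P.support_ne_nil v).1
  rw [T.d_comm v, T.d_comm v] at hsplit
  exact T.d_eq_zero_iff.1 (le_antisymm (by linarith) (T.d_nonneg _ _))

theorem sOn_eq_sum_closest (hP : P.IsPath) (p : V) :
    T.sOn P.support p = 1 / T.vt * ∑ v, T.w v * T.d (T.closest P.support v) p := by
  rw [sOn, T.dbar_eq_sum_closest hP.support_nodup P.support_ne_nil]

variable {u : V}

theorem d_eq_d_add_d_of_adj (hadj : T.G.Adj b u) (hu : u ∉ P.support) {q : V}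
    (hq : q ∈ P.support) : T.d q u = T.d q b + T.d b u := by
  obtain ⟨R, hR, hRP⟩ := P.exists_isPath_support_subset hq P.end_mem_support
  exact (T.d_add_d_of_mem_support (hR.concat (fun h => hu (hRP h)) hadj) (by simp)).symm

theorem dP_of_adj (hadj : T.G.Adj b u) (hu : u ∉ P.support) :
    T.dP P.support u = T.d b u := by
  rw [dP, closest_eq_of_forall_le P.end_mem_support fun q hq => by
    rw [d_eq_d_add_d_of_adj hadj hu hq]; linarith [T.d_nonneg q b]]

theorem closest_concat_of_ne (hadj : T.G.Adj b u) {v : V}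
    (h : T.closest (P.concat hadj).support v ≠ u) :
    T.closest (P.concat hadj).support v = T.closest P.support v := by
  obtain ⟨hmem, hmin⟩ := T.closest_spec (P.concat hadj).support_ne_nil v
  have hmemP := ((Walk.mem_support_concat_iff hadj).1 hmem).resolve_right h
  exact (closest_eq_of_forall_le hmemP fun q hq =>
    hmin q (P.support_subset_support_concat hadj hq)).symm

theorem closest_eq_of_closest_concat_eq (hadj : T.G.Adj b u) (hu : u ∉ P.support) {v : V}
    (h : T.closest (P.concat hadj).support v = u) :
    T.closest P.support v = b := by
  refine closest_eq_of_forall_le P.end_mem_support fun q hq => ?_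
  have hvq := T.d_eq_d_closest_add _ v (P.support_subset_support_concat hadj hq)
  have hvb := T.d_eq_d_closest_add _ v (P.support_subset_support_concat hadj P.end_mem_support)
  rw [h, T.d_comm u q, d_eq_d_add_d_of_adj hadj hu hq] at hvq
  rw [h, T.d_comm u b] at hvb
  rw [T.d_comm b v, T.d_comm q v]
  linarith [T.d_nonneg q b]

theorem d_closest_concat (hadj : T.G.Adj b u) (hu : u ∉ P.support) (v : V)
    {q : V} (hq : q ∈ P.support) :
    T.d (T.closest (P.concat hadj).support v) q = T.d (T.closest P.support v) q +
      if T.closest (P.concat hadj).support v = u then T.d b u else 0 := by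
  by_cases h : T.closest (P.concat hadj).support v = u
  · rw [if_pos h, h, closest_eq_of_closest_concat_eq hadj hu h, T.d_comm u q,
      d_eq_d_add_d_of_adj hadj hu hq, T.d_comm q b]
  · rw [if_neg h, closest_concat_of_ne hadj h, add_zero]

theorem d_closest_concat_self (hadj : T.G.Adj b u) (hu : u ∉ P.support) (v : V) :
    T.d (T.closest (P.concat hadj).support v) u = T.d (T.closest P.support v) b +
      if T.closest (P.concat hadj).support v = u then 0 else T.d b u := by
  by_cases h : T.closest (P.concat hadj).support v = u
  · rw [if_pos h, h, closest_eq_of_closest_concat_eq hadj hu h, T.d_self, T.d_self, add_zero]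
  · rw [if_neg h, closest_concat_of_ne hadj h,
      d_eq_d_add_d_of_adj hadj hu (T.closest_spec P.support_ne_nil v).1]

end WeightedTree

/-- the per-vertex mean travel times `s_p(R) = (1/vt)·d̄_R(û,p)` after
extending the path `P` by an adjacent vertex `u`. -/
theorem sOn_concat {V : Type*} [Fintype V] [DecidableEq V] (T : WeightedTree V)
    {a b u : V} (P : T.G.Walk a b) (hP : P.IsPath)
    (hadj : T.G.Adj b u) (hu : u ∉ P.support) :
    (∀ q ∈ P.support,
        T.sOn (P.concat hadj).support q =
          T.sOn P.support q +
            (1 / T.vt) * T.wBranch (P.concat hadj).support u * T.dP P.support u) ∧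
      T.sOn (P.concat hadj).support u =
        T.sOn P.support b +
          (1 / T.vt) * (T.wT - T.wBranch (P.concat hadj).support u) * T.dP P.support u := by
  have hP' := hP.concat hu hadj
  simp only [WeightedTree.sOn_eq_sum_closest hP, WeightedTree.sOn_eq_sum_closest hP',
    WeightedTree.dP_of_adj hadj hu]
  refine ⟨fun q hq => ?_, ?_⟩
  · simp only [WeightedTree.d_closest_concat hadj hu _ hq, mul_add, Finset.sum_add_distrib,
      T.sum_w_mul_ite_closest_eq]
    ring
  · simp only [WeightedTree.d_closest_concat_self hadj hu, mul_add, Finset.sum_add_distrib,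
      T.sum_w_mul_ite_closest_ne]
    ring
end
end

section
/- Fix k ≥ 2 and suppose all vertex weights are strictly positive and that for every j = 1,…,m−k+1 the subpath P_j := P_{j,j+k−1} has the same length l, i.e. d(p(j),p(j+k−1)) = l. Then the minimum of S̄ over all positions is attained at an extreme position: min_{1 ≤ j ≤ m−k+1} S̄(P_j) = min( S̄(P_1), S̄(P_{m−k+1}) ). -/
open scoped ENNReal

noncomputable section

/-- The vertex sequence `p(a), p(a+1), …, p(b)` of the subpath `P_{a,b}` of the path
with consecutive vertices `p(1), …, p(m)`. -/
def seg {V : Type*} (p : ℕ → V) (a b : ℕ) : List V :=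
  (List.range (b + 1 - a)).map (fun i => p (a + i))

/-!
Every vertex `v` has a gate on the path `p(1), …, p(m)`: a vertex `p(g v)` through which all
routes from `v` to the path pass. On a subpath `P_{j,e}` the gate of `v` is `p(g v)` clamped to
`[j, e]`, so `S̄(P_{j,e})` is `1/vt` times the sum over pairs of vertices of `w_u w_v` times the
distance between their gates on the subpath. Each edge `p(i) p(i+1)` of the subpath separates
the pairs with exactly one gate among `p(1), …, p(i)`, which gives
`S̄(P_{j,e}) = (2/vt) Σ_{j ≤ i < e} d(p(i), p(i+1)) · C_i (w(T) - C_i)`,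
with `C_i` the weight of the vertices with `g v ≤ i`.

If all windows of `k` vertices have the same length, the edge lengths are `(k-1)`-periodic, and
shifting the window from `j` to `j + 1` changes `S̄` by
`(2/vt) d(p(j), p(j+1)) (C_{j+k-1} - C_j) (w(T) - C_j - C_{j+k-1})`. The last factor decreases
with `j`, so `S̄` first increases and then decreases along the positions: its minimum is at an
end.
-/

open Finset SimpleGraph

theorem SimpleGraph.Walk.IsPath.append {V : Type*} {G : SimpleGraph V} {u v w : V}
    {p : G.Walk u v} {q : G.Walk v w} (hp : p.IsPath) (hq : q.IsPath)
    (h : ∀ x ∈ p.support, x ∈ q.support → x = v) : (p.append q).IsPath := by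
  have hq' := hq.support_nodup
  rw [← q.cons_tail_support, List.nodup_cons] at hq'
  refine Walk.IsPath.mk' ?_
  rw [Walk.support_append, List.nodup_append]
  refine ⟨hp.support_nodup, hq'.2, fun a ha b hb hab => hq'.1 ?_⟩
  subst hab
  exact h a ha (List.mem_of_mem_tail hb) ▸ hb

theorem SimpleGraph.Walk.exists_isPath_meeting_set_only_at_end {V : Type*} [DecidableEq V]
    {G : SimpleGraph V} {v z : V} (S : Set V) (R : G.Walk v z) (hz : z ∈ S) :
    ∃ c ∈ S, ∃ Q : G.Walk v c, Q.IsPath ∧ ∀ u ∈ Q.support, u ∈ S → u = c := by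
  suffices ∃ c ∈ S, ∃ Q : G.Walk v c, ∀ u ∈ Q.support, u ∈ S → u = c by
    obtain ⟨c, hc, Q, hQ⟩ := this
    exact ⟨c, hc, Q.bypass, Q.bypass_isPath,
      fun u hu => hQ u (Q.support_bypass_subset_support hu)⟩
  induction R with
  | nil => exact ⟨_, hz, .nil, by simp⟩
  | @cons a b _ hab R ih =>
    by_cases ha : a ∈ S
    · exact ⟨a, ha, .nil, by simp⟩
    · obtain ⟨c, hc, Q, hQ⟩ := ih hz
      refine ⟨c, hc, .cons hab Q, fun u hu huS => ?_⟩
      rcases List.mem_cons.mp (Walk.support_cons hab Q ▸ hu) with rfl | hu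
      · exact absurd huS ha
      · exact hQ u hu huS

section Clamp

variable {D : ℕ → ℝ} {lo hi j e : ℕ}

lemma abs_sub_eq_abs_sub_add_abs_sub_clamp (hD : MonotoneOn D (Set.Icc lo hi)) (hlo : lo ≤ j)
    (hje : j ≤ e) (hhi : e ≤ hi) {a b : ℕ} (ha : a ∈ Set.Icc j e) (hb : b ∈ Set.Icc lo hi) :
    |D a - D b| = |D a - D (max j (min b e))| + |D (max j (min b e)) - D b| := by
  obtain ⟨ha1, ha2⟩ := ha
  obtain ⟨hb1, hb2⟩ := hb
  rcases lt_or_ge b j with hbj | hjb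
  · rw [show max j (min b e) = j by omega]
    have h1 := hD ⟨hb1, by omega⟩ ⟨hlo, by omega⟩ hbj.le
    have h2 := hD ⟨hlo, by omega⟩ ⟨by omega, by omega⟩ ha1
    rw [abs_of_nonneg (by linarith), abs_of_nonneg (by linarith), abs_of_nonneg (by linarith)]
    ring
  rcases lt_or_ge e b with heb | hbe
  · rw [show max j (min b e) = e by omega]
    have h1 := hD ⟨by omega, hhi⟩ ⟨hb1, hb2⟩ heb.le
    have h2 := hD ⟨by omega, by omega⟩ ⟨by omega, hhi⟩ ha2
    rw [abs_of_nonpos (by linarith), abs_of_nonpos (by linarith), abs_of_nonpos (by linarith)]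
    ring
  · rw [show max j (min b e) = b by omega, sub_self, abs_zero, add_zero]

lemma abs_sub_eq_sum_Ico (hD : MonotoneOn D (Set.Icc j e)) {a b : ℕ} (ha : a ∈ Set.Icc j e)
    (hb : b ∈ Set.Icc j e) :
    |D a - D b| = ∑ i ∈ Ico j e, if (a ≤ i ↔ b ≤ i) then 0 else D (i + 1) - D i := by
  wlog hab : a ≤ b generalizing a b
  · rw [abs_sub_comm, this hb ha (by omega)]
    exact sum_congr rfl fun i _ => if_congr iff_comm rfl rfl
  rw [abs_of_nonpos (by linarith [hD ha hb hab]), neg_sub, ← sum_Ico_sub D hab, sum_ite,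
    sum_const_zero, zero_add]
  congr 1
  ext i
  simp only [mem_Ico, mem_filter]
  have := ha.1
  have := hb.2
  omega

end Clamp

lemma sum_sum_ite_iff {α R : Type*} [CommSemiring R] (s : Finset α) (P : α → Prop)
    [DecidablePred P] (w : α → R) :
    ∑ u ∈ s, ∑ v ∈ s, (if (P u ↔ P v) then 0 else w u * w v) =
      2 * (∑ u ∈ s with P u, w u) * ∑ u ∈ s with ¬P u, w u := by
  have hrow : ∀ u ∈ s, ∑ v ∈ s, (if (P u ↔ P v) then 0 else w u * w v) =
      if P u then w u * ∑ v ∈ s with ¬P v, w v else w u * ∑ v ∈ s with P v, w v := by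
    intro u _
    split_ifs with hu <;> rw [mul_sum, sum_filter] <;>
      exact sum_congr rfl fun v _ => by by_cases hv : P v <;> simp [hu, hv]
  rw [sum_congr rfl hrow, sum_ite, ← sum_mul, ← sum_mul]
  ring

lemma min_le_of_sign_increment_antitone {f s : ℕ → ℝ} {a b : ℕ}
    (hs : AntitoneOn s (Set.Ico a b))
    (hup : ∀ i ∈ Set.Ico a b, 0 ≤ s i → f i ≤ f (i + 1))
    (hdown : ∀ i ∈ Set.Ico a b, s i ≤ 0 → f (i + 1) ≤ f i) {j : ℕ} (hj : j ∈ Set.Icc a b) :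
    min (f a) (f b) ≤ f j := by
  obtain ⟨haj, hjb⟩ := hj
  by_cases hneg : ∃ i ∈ Set.Ico a j, s i ≤ 0
  · obtain ⟨i, ⟨hai, hij⟩, hsi⟩ := hneg
    have hanti : AntitoneOn f (Set.Icc j b) :=
      antitoneOn_of_add_one_le Set.ordConnected_Icc fun c _ ⟨hjc, _⟩ ⟨_, hcb⟩ =>
        hdown c ⟨by omega, by omega⟩
          ((hs ⟨hai, by omega⟩ ⟨by omega, by omega⟩ (by omega)).trans hsi)
    exact min_le_of_right_le (hanti ⟨le_rfl, hjb⟩ ⟨hjb, le_rfl⟩ hjb)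
  · push Not at hneg
    have hmono : MonotoneOn f (Set.Icc a j) :=
      monotoneOn_of_le_add_one Set.ordConnected_Icc fun c _ ⟨hac, _⟩ ⟨_, hcj⟩ =>
        hup c ⟨hac, by omega⟩ (hneg c ⟨hac, by omega⟩).le
    exact min_le_of_left_le (hmono ⟨le_rfl, haj⟩ ⟨haj, le_rfl⟩ haj)

lemma min_le_window_sum {δ C : ℕ → ℝ} {W : ℝ} {n a b : ℕ} (hδ : ∀ i ∈ Set.Ico a b, 0 ≤ δ i)
    (hper : ∀ i ∈ Set.Ico a b, δ (i + n) = δ i) (hC : Monotone C) {j : ℕ}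
    (hj : j ∈ Set.Icc a b) :
    let F := fun j => ∑ i ∈ Ico j (j + n), δ i * (C i * (W - C i))
    min (F a) (F b) ≤ F j := by
  intro F
  have hstep : ∀ i ∈ Set.Ico a b, F (i + 1) - F i =
      δ i * ((C (i + n) - C i) * (W - C i - C (i + n))) := by
    intro i hi
    set G := fun i => δ i * (C i * (W - C i))
    have hbot := sum_eq_sum_Ico_succ_bot (show i < i + n + 1 by omega) G
    have htop := sum_Ico_succ_top (show i ≤ i + n by omega) G
    have hG : G (i + n) - G i = δ i * ((C (i + n) - C i) * (W - C i - C (i + n))) := by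
      simp only [G, hper i hi]
      ring
    simp only [F, show i + 1 + n = i + n + 1 by omega]
    linarith
  refine min_le_of_sign_increment_antitone (s := fun i => W - C i - C (i + n))
    (fun i _ i' _ h => by linarith [hC h, hC (Nat.add_le_add_right h n)]) (fun i hi hsi => ?_)
    (fun i hi hsi => ?_) hj
  · have := mul_nonneg (hδ i hi) (mul_nonneg (sub_nonneg.2 (hC (Nat.le_add_right i n))) hsi)
    linarith [hstep i hi]
  · have := mul_nonpos_of_nonneg_of_nonpos (hδ i hi)
      (mul_nonpos_of_nonneg_of_nonpos (sub_nonneg.2 (hC (Nat.le_add_right i n))) hsi)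
    linarith [hstep i hi]

lemma inf'_Icc_eq_min {α β : Type*} [PartialOrder α] [LocallyFiniteOrder α] [LinearOrder β]
    {f : α → β} {a b : α} (hab : a ≤ b) (h : ∀ j ∈ Icc a b, min (f a) (f b) ≤ f j) :
    (Icc a b).inf' (nonempty_Icc.2 hab) f = min (f a) (f b) :=
  le_antisymm (le_min (inf'_le _ (left_mem_Icc.2 hab)) (inf'_le _ (right_mem_Icc.2 hab)))
    (le_inf' _ _ h)

lemma monotone_sum_filter_le {ι β : Type*} [Preorder β] [DecidableRel (α := β) (· ≤ ·)]
    (s : Finset ι) (g : ι → β) {w : ι → ℝ} (hw : ∀ v, 0 ≤ w v) :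
    Monotone fun i => ∑ v ∈ s with g v ≤ i, w v := fun _ _ h =>
  sum_le_sum_of_subset_of_nonneg (monotone_filter_right _ fun _ _ hv => hv.trans h)
    fun v _ _ => hw v

section Seg

variable {α : Type*} {p : ℕ → α} {j e : ℕ}

lemma mem_seg {u : α} : u ∈ seg p j e ↔ ∃ a ∈ Set.Icc j e, p a = u := by
  simp only [seg, List.mem_map, List.mem_range, Set.mem_Icc]
  constructor
  · rintro ⟨i, hi, rfl⟩
    exact ⟨j + i, ⟨by omega, by omega⟩, rfl⟩
  · rintro ⟨a, ⟨hja, hae⟩, rfl⟩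
    exact ⟨a - j, by omega, by rw [Nat.add_sub_cancel' hja]⟩

lemma seg_ne_nil (hje : j ≤ e) : seg p j e ≠ [] := by
  simp only [seg, ne_eq, List.map_eq_nil_iff, List.range_eq_nil]
  omega

lemma seg_nodup (hp : Set.InjOn p (Set.Icc j e)) : (seg p j e).Nodup := by
  refine (List.nodup_range).map_on fun a ha b hb hab => ?_
  rw [List.mem_range] at ha hb
  have := hp ⟨Nat.le_add_right j a, by omega⟩ ⟨Nat.le_add_right j b, by omega⟩ hab
  omega

end Seg

namespace WeightedTree

variable {V : Type*} [Fintype V] (T : WeightedTree V) {x y : V} {W : T.G.Walk x y} {m : ℕ}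
  {p : ℕ → V}

@[simp]
lemma plen_append_s13 {a b c : V} (P : T.G.Walk a b) (Q : T.G.Walk b c) :
    T.plen (P.append Q) = T.plen P + T.plen Q := by
  simp [plen, Walk.edges_append]

@[simp]
lemma plen_reverse {a b : V} (P : T.G.Walk a b) : T.plen P.reverse = T.plen P := by
  simp [plen, Walk.edges_reverse]

lemma plen_nonneg_s13 {a b : V} (P : T.G.Walk a b) : 0 ≤ T.plen P :=
  List.sum_nonneg fun _ hl => by
    obtain ⟨e, he, rfl⟩ := List.mem_map.mp hl
    exact (T.len_pos e (P.edges_subset_edgeSet he)).le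

lemma plen_pos_s13 {a b : V} (hab : a ≠ b) (P : T.G.Walk a b) : 0 < T.plen P := by
  cases P with
  | nil => exact absurd rfl hab
  | cons h P =>
    simp only [plen, Walk.edges_cons, List.map_cons, List.sum_cons]
    exact add_pos_of_pos_of_nonneg (T.len_pos _ h) (T.plen_nonneg_s13 P)

lemma d_eq_plen_s13 {a b : V} {P : T.G.Walk a b} (hP : P.IsPath) : T.d a b = T.plen P := by
  have h := T.isTree.existsUnique_path a b
  rw [d, h.unique h.choose_spec.1 hP]
  rfl

lemma d_comm_s13 (a b : V) : T.d a b = T.d b a := by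
  obtain ⟨P, hP, -⟩ := T.isTree.existsUnique_path a b
  rw [T.d_eq_plen_s13 hP, T.d_eq_plen_s13 hP.reverse, plen_reverse]

lemma d_nonneg_s13 (a b : V) : 0 ≤ T.d a b := by
  obtain ⟨P, hP, -⟩ := T.isTree.existsUnique_path a b
  exact T.d_eq_plen_s13 hP ▸ T.plen_nonneg_s13 P

lemma d_pos {a b : V} (hab : a ≠ b) : 0 < T.d a b := by
  obtain ⟨P, hP, -⟩ := T.isTree.existsUnique_path a b
  exact T.d_eq_plen_s13 hP ▸ T.plen_pos_s13 hab P

lemma getVert_eq_of_support_eq (hsupp : W.support = (List.range m).map (fun j => p (j + 1)))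
    {a : ℕ} (ha : a ∈ Set.Icc 1 m) : W.getVert (a - 1) = p a := by
  have hlen : W.length + 1 = m := by rw [← W.length_support, hsupp]; simp
  rw [W.getVert_eq_support_getElem (by have := ha.2; omega)]
  simp only [hsupp, List.getElem_map, List.getElem_range, Nat.sub_add_cancel ha.1]

lemma mem_support_of_support_eq (hsupp : W.support = (List.range m).map (fun j => p (j + 1)))
    {a : ℕ} (ha : a ∈ Set.Icc 1 m) : p a ∈ W.support :=
  T.getVert_eq_of_support_eq hsupp ha ▸ W.getVert_mem_support _

lemma injOn_of_support_eq (hW : W.IsPath)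
    (hsupp : W.support = (List.range m).map (fun j => p (j + 1))) :
    Set.InjOn p (Set.Icc 1 m) := by
  intro a ⟨ha1, ha2⟩ b ⟨hb1, hb2⟩ hab
  have hnd := hW.support_nodup
  rw [hsupp] at hnd
  have := List.inj_on_of_nodup_map hnd (List.mem_range.2 (show a - 1 < m by omega))
    (List.mem_range.2 (show b - 1 < m by omega))
    (by simpa only [Nat.sub_add_cancel ha1, Nat.sub_add_cancel hb1] using hab)
  omega

variable [DecidableEq V]

lemma d_add_d_of_mem_support_s13 {a b u : V} {P : T.G.Walk a b} (hP : P.IsPath)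
    (hu : u ∈ P.support) : T.d a u + T.d u b = T.d a b := by
  rw [T.d_eq_plen_s13 hP, ← P.take_spec hu, plen_append_s13, T.d_eq_plen_s13 (hP.takeUntil hu),
    T.d_eq_plen_s13 (hP.dropUntil hu)]

lemma d_eq_d_add_d_of_isPath_append {v c z u : V} {Q : T.G.Walk v c} {N : T.G.Walk c z}
    (h : (Q.append N).IsPath) (hu : u ∈ N.support) : T.d v u = T.d v c + T.d c u := by
  rw [← N.take_spec hu, Walk.append_assoc] at h
  have hvu := h.of_append_left
  rw [T.d_eq_plen_s13 hvu, plen_append_s13, T.d_eq_plen_s13 hvu.of_append_left,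
    T.d_eq_plen_s13 hvu.of_append_right]

lemma exists_gate (hW : W.IsPath) (v : V) :
    ∃ c ∈ W.support, ∀ u ∈ W.support, T.d v u = T.d v c + T.d c u := by
  obtain ⟨R⟩ := T.isTree.connected.preconnected v x
  obtain ⟨c, hc, Q, hQ, hQW⟩ :=
    R.exists_isPath_meeting_set_only_at_end {u | u ∈ W.support} W.start_mem_support
  refine ⟨c, hc, fun u hu => ?_⟩
  have key : ∀ {z} (N : T.G.Walk c z), N.IsPath → N.support ⊆ W.support → u ∈ N.support →
      T.d v u = T.d v c + T.d c u := fun N hN hNW huN =>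
    T.d_eq_d_add_d_of_isPath_append (hQ.append hN fun u' hQu' hNu' => hQW u' hQu' (hNW hNu')) huN
  rw [← W.take_spec hc, Walk.mem_support_append_iff] at hu
  rcases hu with hu | hu
  · exact key _ (hW.takeUntil hc).reverse
      (by simpa using W.support_takeUntil_subset_support hc) (by simpa using hu)
  · exact key _ (hW.dropUntil hc) (W.support_dropUntil_subset_support hc) hu

lemma closest_mem {l : List V} (hl : l ≠ []) (v : V) : T.closest l v ∈ l := by
  have hex : ∃ u ∈ l, ∀ u' ∈ l, T.d u v ≤ T.d u' v := by
    simpa using l.toFinset.exists_min_image (T.d · v) (List.toFinset_nonempty_iff l |>.2 hl)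
  rw [closest, dif_pos hex]
  exact hex.choose_spec.1

lemma closest_eq_of_gate {l : List V} {v c : V} (hc : c ∈ l)
    (hgate : ∀ u ∈ l, T.d v u = T.d v c + T.d c u) : T.closest l v = c := by
  have hex : ∃ u ∈ l, ∀ u' ∈ l, T.d u v ≤ T.d u' v :=
    ⟨c, hc, fun u hu => by
      rw [T.d_comm_s13 c, T.d_comm_s13 u, hgate u hu]
      linarith [T.d_nonneg_s13 c u]⟩
  rw [closest, dif_pos hex]
  obtain ⟨hmem, hmin⟩ := hex.choose_spec
  by_contra hne
  have hpos := T.d_pos (Ne.symm hne)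
  have hle := hmin c hc
  rw [T.d_comm_s13 _ v, T.d_comm_s13 c, hgate _ hmem] at hle
  linarith

lemma dbar_eq_sum {l : List V} (hl : l ≠ []) (hnd : l.Nodup) (q : V) :
    T.dbar l q = ∑ u, T.w u * T.d (T.closest l u) q := by
  rw [dbar, ← List.sum_toFinset _ hnd, ← Finset.sum_fiberwise_of_maps_to
    (s := univ) (t := l.toFinset) (fun u _ => List.mem_toFinset.2 (T.closest_mem hl u))]
  refine Finset.sum_congr rfl fun q' _ => ?_
  rw [wBranch, Finset.sum_mul]
  exact Finset.sum_congr rfl fun u hu => by rw [(Finset.mem_filter.1 hu).2]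

lemma Sbar_eq_sum_sum {l : List V} (hl : l ≠ []) (hnd : l.Nodup) :
    T.Sbar l = (1 / T.vt) *
      ∑ u, ∑ v, T.w u * T.w v * T.d (T.closest l u) (T.closest l v) := by
  simp only [Sbar, s, sOn, T.dbar_eq_sum hl hnd, Finset.mul_sum]
  rw [Finset.sum_comm]
  refine Finset.sum_congr rfl fun u _ => Finset.sum_congr rfl fun v _ => ?_
  ring

lemma d_add_d_of_support_eq (hW : W.IsPath)
    (hsupp : W.support = (List.range m).map (fun j => p (j + 1))) {a b : ℕ} (ha : 1 ≤ a)
    (hab : a ≤ b) (hb : b ≤ m) : T.d x (p a) + T.d (p a) (p b) = T.d x (p b) := by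
  have hmem : p a ∈ (W.take (b - 1)).support := by
    have := (W.take (b - 1)).getVert_mem_support (a - 1)
    rwa [Walk.take_getVert, min_eq_right (by omega),
      T.getVert_eq_of_support_eq hsupp ⟨ha, by omega⟩] at this
  have := T.d_add_d_of_mem_support_s13 (hW.take (b - 1)) hmem
  rwa [T.getVert_eq_of_support_eq hsupp ⟨by omega, hb⟩] at this

lemma monotoneOn_d_of_support_eq (hW : W.IsPath)
    (hsupp : W.support = (List.range m).map (fun j => p (j + 1))) :
    MonotoneOn (fun a => T.d x (p a)) (Set.Icc 1 m) := fun a ha b hb hab => by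
  linarith [T.d_add_d_of_support_eq hW hsupp ha.1 hab hb.2, T.d_nonneg_s13 (p a) (p b)]

lemma d_eq_abs_sub_of_support_eq (hW : W.IsPath)
    (hsupp : W.support = (List.range m).map (fun j => p (j + 1))) {a b : ℕ}
    (ha : a ∈ Set.Icc 1 m) (hb : b ∈ Set.Icc 1 m) :
    T.d (p a) (p b) = |T.d x (p a) - T.d x (p b)| := by
  wlog hab : a ≤ b generalizing a b
  · rw [T.d_comm_s13, abs_sub_comm, this hb ha (by omega)]
  have := T.d_add_d_of_support_eq hW hsupp ha.1 hab hb.2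
  rw [abs_of_nonpos (by linarith [T.d_nonneg_s13 (p a) (p b)])]
  linarith

lemma d_step_add_eq_of_window_eq (hW : W.IsPath)
    (hsupp : W.support = (List.range m).map (fun j => p (j + 1))) {i n : ℕ} (hi : 1 ≤ i)
    (hin : i + 1 + n ≤ m) (h : T.d (p i) (p (i + n)) = T.d (p (i + 1)) (p (i + 1 + n))) :
    T.d x (p (i + n + 1)) - T.d x (p (i + n)) = T.d x (p (i + 1)) - T.d x (p i) := by
  have h1 := T.d_add_d_of_support_eq hW hsupp hi (Nat.le_add_right i n) (by omega)
  have h2 := T.d_add_d_of_support_eq hW hsupp (by omega) (Nat.le_add_right (i + 1) n) hin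
  rw [show i + n + 1 = i + 1 + n by omega]
  linarith

lemma exists_gate_index (hW : W.IsPath)
    (hsupp : W.support = (List.range m).map (fun j => p (j + 1))) (v : V) :
    ∃ b ∈ Set.Icc 1 m, ∀ a ∈ Set.Icc 1 m, T.d v (p a) = T.d v (p b) + T.d (p b) (p a) := by
  obtain ⟨c, hc, hgate⟩ := T.exists_gate hW v
  rw [hsupp] at hc
  obtain ⟨i, hi, rfl⟩ := List.mem_map.1 hc
  exact ⟨i + 1, ⟨by omega, List.mem_range.1 hi⟩,
    fun a ha => hgate _ (T.mem_support_of_support_eq hsupp ha)⟩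

lemma closest_seg (hW : W.IsPath)
    (hsupp : W.support = (List.range m).map (fun j => p (j + 1))) {v : V} {b : ℕ}
    (hb : b ∈ Set.Icc 1 m)
    (hgate : ∀ a ∈ Set.Icc 1 m, T.d v (p a) = T.d v (p b) + T.d (p b) (p a))
    {j e : ℕ} (hj : 1 ≤ j) (hje : j ≤ e) (he : e ≤ m) :
    T.closest (seg p j e) v = p (max j (min b e)) := by
  set c := max j (min b e)
  have hc : c ∈ Set.Icc j e := ⟨le_max_left _ _, by omega⟩
  have hc' : c ∈ Set.Icc 1 m := ⟨by omega, by omega⟩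
  refine T.closest_eq_of_gate (mem_seg.2 ⟨c, hc, rfl⟩) fun u hu => ?_
  obtain ⟨a, ha, rfl⟩ := mem_seg.1 hu
  have ha' : a ∈ Set.Icc 1 m := ⟨hj.trans ha.1, ha.2.trans he⟩
  have hsplit : |T.d x (p a) - T.d x (p b)| =
      |T.d x (p a) - T.d x (p c)| + |T.d x (p c) - T.d x (p b)| :=
    abs_sub_eq_abs_sub_add_abs_sub_clamp (T.monotoneOn_d_of_support_eq hW hsupp) hj hje he ha hb
  rw [hgate a ha', hgate c hc', T.d_eq_abs_sub_of_support_eq hW hsupp hb ha',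
    T.d_eq_abs_sub_of_support_eq hW hsupp hb hc', T.d_eq_abs_sub_of_support_eq hW hsupp hc' ha']
  linarith [abs_sub_comm (T.d x (p b)) (T.d x (p a)), abs_sub_comm (T.d x (p b)) (T.d x (p c)),
    abs_sub_comm (T.d x (p c)) (T.d x (p a))]

lemma Sbar_seg (hW : W.IsPath) (hsupp : W.support = (List.range m).map (fun j => p (j + 1)))
    {g : V → ℕ} (hg : ∀ v, g v ∈ Set.Icc 1 m)
    (hgate : ∀ v, ∀ a ∈ Set.Icc 1 m, T.d v (p a) = T.d v (p (g v)) + T.d (p (g v)) (p a))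
    {j e : ℕ} (hj : 1 ≤ j) (hje : j ≤ e) (he : e ≤ m) :
    T.Sbar (seg p j e) = ∑ i ∈ Ico j e, 2 / T.vt * (T.d x (p (i + 1)) - T.d x (p i)) *
      ((∑ v with g v ≤ i, T.w v) * (T.wT - ∑ v with g v ≤ i, T.w v)) := by
  set c := fun v => max j (min (g v) e)
  have hc : ∀ v, c v ∈ Set.Icc j e := fun v => ⟨le_max_left _ _, max_le hje (min_le_right _ _)⟩
  have hc' : ∀ v, c v ∈ Set.Icc 1 m := fun v => ⟨hj.trans (hc v).1, (hc v).2.trans he⟩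
  have hcut : ∀ i ∈ Ico j e, ∀ v, (c v ≤ i ↔ g v ≤ i) := fun i hi v => by
    rw [mem_Ico] at hi
    simp only [c]
    omega
  have hpair : ∀ u v, T.d (T.closest (seg p j e) u) (T.closest (seg p j e) v) =
      ∑ i ∈ Ico j e, if (g u ≤ i ↔ g v ≤ i) then 0 else T.d x (p (i + 1)) - T.d x (p i) := by
    intro u v
    rw [T.closest_seg hW hsupp (hg u) (hgate u) hj hje he,
      T.closest_seg hW hsupp (hg v) (hgate v) hj hje he,
      T.d_eq_abs_sub_of_support_eq hW hsupp (hc' u) (hc' v),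
      abs_sub_eq_sum_Ico ((T.monotoneOn_d_of_support_eq hW hsupp).mono
        (Set.Icc_subset_Icc hj he)) (hc u) (hc v)]
    exact sum_congr rfl fun i hi => if_congr (by rw [hcut i hi u, hcut i hi v]) rfl rfl
  have hp : Set.InjOn p (Set.Icc j e) :=
    (T.injOn_of_support_eq hW hsupp).mono (Set.Icc_subset_Icc hj he)
  have hterm : ∀ u v, T.w u * T.w v * T.d (T.closest (seg p j e) u) (T.closest (seg p j e) v) =
      ∑ i ∈ Ico j e, (T.d x (p (i + 1)) - T.d x (p i)) *
        if (g u ≤ i ↔ g v ≤ i) then 0 else T.w u * T.w v := by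
    intro u v
    rw [hpair, mul_sum]
    exact sum_congr rfl fun i _ => by split_ifs <;> ring
  rw [T.Sbar_eq_sum_sum (seg_ne_nil hje) (seg_nodup hp),
    sum_congr rfl fun u _ => sum_congr rfl fun v _ => hterm u v,
    sum_congr rfl fun u _ => sum_comm, sum_comm, mul_sum]
  refine sum_congr rfl fun i _ => ?_
  rw [sum_congr rfl fun u _ => (mul_sum _ _ _).symm, ← mul_sum, sum_sum_ite_iff, wT,
    ← sum_filter_add_sum_filter_not univ (g · ≤ i) T.w]
  ring

end WeightedTree

/-- the minimum of the mean service time `S̄` over all positions of a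
fixed-length subpath of `p(1), …, p(m)` is attained at one of the two extreme
positions. -/
theorem sbar_shift_min_at_ends {V : Type*} [Fintype V] [DecidableEq V]
    (T : WeightedTree V) {x y : V} (W : T.G.Walk x y) (hW : W.IsPath)
    (m k : ℕ) (hk : 2 ≤ k) (hkm : k ≤ m) (p : ℕ → V)
    (hsupp : W.support = (List.range m).map (fun j => p (j + 1)))
    (l : ℝ)
    (hlen : ∀ j ∈ Finset.Icc 1 (m - k + 1), T.d (p j) (p (j + k - 1)) = l) :
    (Finset.Icc 1 (m - k + 1)).inf' (Finset.nonempty_Icc.mpr (by omega))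
        (fun j => T.Sbar (seg p j (j + k - 1))) =
      min (T.Sbar (seg p 1 k)) (T.Sbar (seg p (m - k + 1) m)) := by
  choose g hg hgate using T.exists_gate_index hW hsupp
  set C : ℕ → ℝ := fun i => ∑ v with g v ≤ i, T.w v
  set δ : ℕ → ℝ := fun i => 2 / T.vt * (T.d x (p (i + 1)) - T.d x (p i))
  have hS : ∀ j ∈ Set.Icc 1 (m - k + 1), T.Sbar (seg p j (j + k - 1)) =
      ∑ i ∈ Ico j (j + (k - 1)), δ i * (C i * (T.wT - C i)) := by
    rintro j ⟨hj1, hj2⟩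
    rw [T.Sbar_seg hW hsupp hg hgate hj1 (by omega) (by omega),
      show j + k - 1 = j + (k - 1) by omega]
  have hδ : ∀ i ∈ Set.Ico 1 (m - k + 1), 0 ≤ δ i := fun i ⟨hi1, hi2⟩ =>
    mul_nonneg (div_nonneg zero_le_two T.vt_pos.le) (sub_nonneg.2
      (T.monotoneOn_d_of_support_eq hW hsupp ⟨hi1, by omega⟩ ⟨by omega, by omega⟩ (by omega)))
  have hper : ∀ i ∈ Set.Ico 1 (m - k + 1), δ (i + (k - 1)) = δ i := by
    rintro i ⟨hi1, hi2⟩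
    have hwin : T.d (p i) (p (i + (k - 1))) = T.d (p (i + 1)) (p (i + 1 + (k - 1))) := by
      rw [show i + (k - 1) = i + k - 1 by omega, show i + 1 + (k - 1) = i + 1 + k - 1 by omega,
        hlen i (mem_Icc.2 ⟨hi1, by omega⟩), hlen (i + 1) (mem_Icc.2 ⟨by omega, by omega⟩)]
    simp only [δ, T.d_step_add_eq_of_window_eq hW hsupp hi1 (by omega) hwin]
  rw [inf'_Icc_eq_min (by omega) fun j hj => ?_]
  · simp only [show 1 + k - 1 = k by omega, show m - k + 1 + k - 1 = m by omega]
  · rw [hS 1 ⟨le_rfl, by omega⟩, hS (m - k + 1) ⟨by omega, le_rfl⟩, hS j (mem_Icc.1 hj)]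
    exact min_le_window_sum hδ hper (monotone_sum_filter_le _ g T.w_nonneg) (mem_Icc.1 hj)
end
end
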